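/- Let d be a positive integer, α ∈ (0,2), s ≥ 0, and let β > 0 satisfy 1/β + s/α < (d+α)/α. Define w_t(x) = t^{-1/β}(1 + t^{-s/α}) W(t^{-1/α}|x|) for t > 0 and x ∈ ℝ^d, where W(r) = log(e + r²)/(1 + r^{d+α}). Then for every x ∈ ℝ^d the map t ↦ w_t(x) is differentiable on (0,∞), and there exist constants R₀ > 0 and c₂ > 0, depending only on d, α, β and s, such that whenever t > 0 and x ∈ ℝ^d satisfy t^{-1/α}|x| ≥ R₀, one has ∂_t w_t(x) ≥ c₂ · t^{-1/β − 1} (1 + t^{-s/α}) W(t^{-1/α}|x|). -/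

import Mathlib

/-
Write `r = t^{-1/α}|x|`. By the chain rule, `t^{1/β+1} ∂_t w_t(x)` equals
`-(1/β)(1 + t^{-s/α}) W(r) - (s/α) t^{-s/α} W(r) - (1 + t^{-s/α}) r W'(r)/α`.
Since `log(e + r²)` is negligible against powers of `r`, the elasticity `-r W'(r)/W(r)` tends
to `d + α`, so for large `r` it exceeds `d + α - αδ/2`, where `δ = (d+α)/α - 1/β - s/α > 0`;
bounding `t^{-s/α}` by `1 + t^{-s/α}` then leaves `(δ/2)(1 + t^{-s/α}) W(r)` in the bracket.
-/

open Set

/-- The profile function `W(r) = log(e + r²)/(1 + r^{d+α})`. -/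
noncomputable def Wfn (d : ℕ) (α r : ℝ) : ℝ :=
  Real.log (Real.exp 1 + r ^ 2) / (1 + r ^ ((d : ℝ) + α))

/-- `w_t(x) = t^{-1/β}(1 + t^{-s/α}) W(t^{-1/α}|x|)`. -/
noncomputable def wfn (d : ℕ) (α β s t : ℝ) (x : EuclideanSpace ℝ (Fin d)) : ℝ :=
  t ^ (-(1:ℝ)/β) * (1 + t ^ (-s/α)) * Wfn d α (t ^ (-(1:ℝ)/α) * ‖x‖)

open Filter

lemma Wfn_nonneg (d : ℕ) (α : ℝ) {r : ℝ} (hr : 0 ≤ r) : 0 ≤ Wfn d α r := by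
  have hlog : 0 ≤ Real.log (Real.exp 1 + r ^ 2) :=
    Real.log_nonneg (by nlinarith [Real.add_one_le_exp (1:ℝ)])
  unfold Wfn
  positivity

lemma hasDerivAt_Wfn (d : ℕ) (α : ℝ) {r : ℝ} (hr : 0 ≤ r) (h : r ≠ 0 ∨ 1 ≤ (d:ℝ) + α) :
    HasDerivAt (Wfn d α)
      ((2 * r / (Real.exp 1 + r ^ 2) * (1 + r ^ ((d:ℝ) + α)) -
        Real.log (Real.exp 1 + r ^ 2) * (((d:ℝ) + α) * r ^ ((d:ℝ) + α - 1))) /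
          (1 + r ^ ((d:ℝ) + α)) ^ 2) r := by
  have hnum : HasDerivAt (fun v : ℝ => Real.log (Real.exp 1 + v ^ 2))
      (2 * r / (Real.exp 1 + r ^ 2)) r := by
    simpa using ((hasDerivAt_pow 2 r).const_add (Real.exp 1)).log (by positivity)
  have hP : 0 ≤ r ^ ((d:ℝ) + α) := Real.rpow_nonneg hr _
  exact hnum.div ((Real.hasDerivAt_rpow_const h).const_add 1) (by positivity)

lemma neg_mul_deriv_Wfn {d : ℕ} {α r : ℝ} (hr : 0 < r) :
    -(r * deriv (Wfn d α) r) =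
      (Real.log (Real.exp 1 + r ^ 2) * (((d:ℝ) + α) * r ^ ((d:ℝ) + α)) -
        2 * r ^ 2 / (Real.exp 1 + r ^ 2) * (1 + r ^ ((d:ℝ) + α))) / (1 + r ^ ((d:ℝ) + α)) ^ 2 := by
  have hP : 0 < r ^ ((d:ℝ) + α) := Real.rpow_pos_of_pos hr _
  have hrq : r * r ^ ((d:ℝ) + α - 1) = r ^ ((d:ℝ) + α) := by
    rw [Real.rpow_sub hr, Real.rpow_one]; field_simp
  rw [(hasDerivAt_Wfn d α hr.le (Or.inl hr.ne')).deriv, ← hrq]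
  have : (1:ℝ) + r * r ^ ((d:ℝ) + α - 1) ≠ 0 := by rw [hrq]; positivity
  field_simp
  ring

lemma mul_log_sub_le_of_large {q ε L P f : ℝ} (hε : 0 < ε) (hL : 4 / ε ≤ L)
    (hP : 2 * q / ε ≤ P) (hP0 : 0 ≤ P) (hf : f ≤ 2) :
    (q - ε) * (L * (1 + P)) ≤ L * (q * P) - f * (1 + P) := by
  have hL' : 4 ≤ L * ε := (div_le_iff₀ hε).mp hL
  have hP' : 2 * q ≤ P * ε := (div_le_iff₀ hε).mp hP
  have hL0 : 0 ≤ L := le_trans (by positivity) hL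
  have hgap : L * (ε * (1 + P) / 2) ≤ L * (ε * (1 + P) - q) :=
    mul_le_mul_of_nonneg_left (by linarith) hL0
  have hf' : f * (1 + P) ≤ 2 * (1 + P) := mul_le_mul_of_nonneg_right hf (by linarith)
  nlinarith

lemma eventually_sub_mul_Wfn_le {d : ℕ} {α ε : ℝ} (hq : 0 < (d:ℝ) + α) (hε : 0 < ε) :
    ∀ᶠ r in atTop, ((d:ℝ) + α - ε) * Wfn d α r ≤ -(r * deriv (Wfn d α) r) := by
  have hlog : Tendsto (fun r : ℝ => Real.log (Real.exp 1 + r ^ 2)) atTop atTop :=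
    Real.tendsto_log_atTop.comp
      (tendsto_atTop_add_const_left _ _ (tendsto_pow_atTop two_ne_zero))
  filter_upwards [hlog.eventually_ge_atTop (4 / ε),
    (tendsto_rpow_atTop hq).eventually_ge_atTop (2 * ((d:ℝ) + α) / ε), eventually_gt_atTop 0]
    with r hL hP hr
  have hP0 : 0 < r ^ ((d:ℝ) + α) := Real.rpow_pos_of_pos hr _
  have hf : 2 * r ^ 2 / (Real.exp 1 + r ^ 2) ≤ 2 := by
    rw [div_le_iff₀ (by positivity)]; nlinarith [Real.exp_pos 1]
  rw [neg_mul_deriv_Wfn hr, Wfn, le_div_iff₀ (by positivity)]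
  calc _ = ((d:ℝ) + α - ε) * (Real.log (Real.exp 1 + r ^ 2) * (1 + r ^ ((d:ℝ) + α))) := by
        field_simp
    _ ≤ _ := mul_log_sub_le_of_large hε hL hP hP0.le hf

lemma hasDerivAt_wfn (d : ℕ) (α β s : ℝ) {t : ℝ} (ht : 0 < t) (x : EuclideanSpace ℝ (Fin d))
    (hW : DifferentiableAt ℝ (Wfn d α) (t ^ (-(1:ℝ)/α) * ‖x‖)) :
    HasDerivAt (fun τ => wfn d α β s τ x)
      (t ^ (-(1:ℝ)/β - 1) *
        (-(1/β) * (1 + t ^ (-s/α)) * Wfn d α (t ^ (-(1:ℝ)/α) * ‖x‖)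
          - s/α * t ^ (-s/α) * Wfn d α (t ^ (-(1:ℝ)/α) * ‖x‖)
          - (1 + t ^ (-s/α)) * (t ^ (-(1:ℝ)/α) * ‖x‖ *
              deriv (Wfn d α) (t ^ (-(1:ℝ)/α) * ‖x‖)) / α)) t := by
  have hA := Real.hasDerivAt_rpow_const (p := -(1:ℝ)/β) (Or.inl ht.ne')
  have hB := (Real.hasDerivAt_rpow_const (p := -s/α) (Or.inl ht.ne')).const_add 1
  have hr := (Real.hasDerivAt_rpow_const (p := -(1:ℝ)/α) (Or.inl ht.ne')).mul_const ‖x‖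
  refine ((hA.mul hB).mul (hW.hasDerivAt.comp t hr)).congr_deriv ?_
  simp only [Real.rpow_sub_one ht.ne', Function.comp_apply, Pi.mul_apply]
  field_simp
  ring

lemma half_gap_mul_le {α β s q B W E : ℝ} (hα : 0 < α) (hs : 0 ≤ s) (hB : 0 ≤ B) (hW : 0 ≤ W)
    (hE : (q - α * (q/α - (1/β + s/α)) / 2) * W ≤ -E) :
    (q/α - (1/β + s/α)) / 2 * ((1 + B) * W) ≤
      -(1/β) * (1 + B) * W - s/α * B * W - (1 + B) * E / α := by
  have hE' := mul_le_mul_of_nonneg_left hE (by linarith : (0:ℝ) ≤ 1 + B)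
  have hsW := mul_nonneg hs hW
  rw [← sub_nonneg]
  have hdiff : -(1/β) * (1 + B) * W - s/α * B * W - (1 + B) * E / α
      - (q/α - (1/β + s/α)) / 2 * ((1 + B) * W)
      = ((1 + B) * -E - (1 + B) * ((q - α * (q/α - (1/β + s/α)) / 2) * W) + s * W) / α := by
    field_simp; ring
  rw [hdiff]
  apply div_nonneg _ hα.le
  linarith

theorem stmt_7_general (d : ℕ) (hd : 0 < d) (α β s : ℝ) (hα : α ∈ Ioo (0:ℝ) 2)
    (hs : 0 ≤ s) (hcrit : 1/β + s/α < ((d:ℝ) + α)/α) :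
    (∀ x : EuclideanSpace ℝ (Fin d), ∀ t ∈ Ioi (0:ℝ),
      DifferentiableAt ℝ (fun τ => wfn d α β s τ x) t) ∧
    ∃ R₀ > (0:ℝ), ∃ c₂ > (0:ℝ), ∀ t > (0:ℝ), ∀ x : EuclideanSpace ℝ (Fin d),
      R₀ ≤ t ^ (-(1:ℝ)/α) * ‖x‖ →
      c₂ * t ^ (-(1:ℝ)/β - 1) * (1 + t ^ (-s/α)) * Wfn d α (t ^ (-(1:ℝ)/α) * ‖x‖) ≤
        deriv (fun τ => wfn d α β s τ x) t := by
  have hq : (1:ℝ) ≤ d + α := by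
    have : (1:ℝ) ≤ d := by exact_mod_cast hd
    linarith [hα.1]
  have hr0 : ∀ t > (0:ℝ), ∀ x : EuclideanSpace ℝ (Fin d), 0 ≤ t ^ (-(1:ℝ)/α) * ‖x‖ :=
    fun t ht x => mul_nonneg (Real.rpow_nonneg ht.le _) (norm_nonneg x)
  have hW : ∀ t > (0:ℝ), ∀ x, DifferentiableAt ℝ (Wfn d α) (t ^ (-(1:ℝ)/α) * ‖x‖) :=
    fun t ht x => (hasDerivAt_Wfn d α (hr0 t ht x) (Or.inr hq)).differentiableAt
  refine ⟨fun x t ht => (hasDerivAt_wfn d α β s ht x (hW t ht x)).differentiableAt, ?_⟩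
  set δ := ((d:ℝ) + α)/α - (1/β + s/α)
  have hδ : 0 < δ := sub_pos.mpr hcrit
  obtain ⟨R, hR⟩ := eventually_atTop.mp
    (eventually_sub_mul_Wfn_le (d := d) (by linarith) (half_pos (mul_pos hα.1 hδ)))
  refine ⟨max R 1, lt_max_of_lt_right one_pos, δ / 2, half_pos hδ, fun t ht x hr => ?_⟩
  rw [(hasDerivAt_wfn d α β s ht x (hW t ht x)).deriv, mul_assoc, mul_assoc, mul_left_comm]
  gcongr
  exact half_gap_mul_le hα.1 hs (Real.rpow_nonneg ht.le _) (Wfn_nonneg d α (hr0 t ht x))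
    (hR _ (le_of_max_le_left hr))

/-- The map `t ↦ w_t(x)` is differentiable on `(0,∞)`, and in the far
region `t^{-1/α}|x| ≥ R₀` its time derivative satisfies
`∂_t w_t(x) ≥ c₂ t^{-1/β-1}(1 + t^{-s/α}) W(t^{-1/α}|x|)`. -/
theorem stmt_7 (d : ℕ) (hd : 0 < d) (α β s : ℝ) (hα : α ∈ Ioo (0:ℝ) 2)
    (hβ : 0 < β) (hs : 0 ≤ s) (hcrit : 1/β + s/α < ((d:ℝ) + α)/α) :
    (∀ x : EuclideanSpace ℝ (Fin d), ∀ t ∈ Ioi (0:ℝ),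
      DifferentiableAt ℝ (fun τ => wfn d α β s τ x) t) ∧
    ∃ R₀ > (0:ℝ), ∃ c₂ > (0:ℝ), ∀ t > (0:ℝ), ∀ x : EuclideanSpace ℝ (Fin d),
      R₀ ≤ t ^ (-(1:ℝ)/α) * ‖x‖ →
      c₂ * t ^ (-(1:ℝ)/β - 1) * (1 + t ^ (-s/α)) * Wfn d α (t ^ (-(1:ℝ)/α) * ‖x‖) ≤
        deriv (fun τ => wfn d α β s τ x) t :=
  stmt_7_general d hd α β s hα hs hcrit
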